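/- arXiv:1607.06061 — 4 statements merged into one kernel-verified Lean document; each statement's English description precedes it below -/
import Mathlib

section
/- The sum over j from 0 to n of C(n+j, j) * C(n, j) * ((x-1)/2)^j equals the n-th Legendre polynomial evaluated at x. -/
/-!
Substituting `x = 1 - 2y` turns Rodrigues' formula for `P_n` into Rodrigues' formula for the
shifted Legendre polynomial `P̃_n(y) = (1/n!) dⁿ/dyⁿ [yⁿ(1-y)ⁿ]`, because `x² - 1 = -4y(1-y)` and
`d/dx = -½ d/dy`. Hence `P_n(x) = P̃_n((1-x)/2)`, and the coefficients of `P̃_n` are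
`(-1)ʲ C(n,j) C(n+j,n)`.
-/

open Polynomial

/-- The `n`-th Legendre polynomial, defined by Rodrigues' formula
`P_n(x) = (1/(2^n n!)) dⁿ/dxⁿ [(x²-1)ⁿ]`. -/
noncomputable def legendre (n : ℕ) : Polynomial ℝ :=
  C ((1 : ℝ) / (2 ^ n * n.factorial)) * derivative^[n] ((X ^ 2 - 1) ^ n)

theorem Polynomial.iterate_derivative_comp_C_mul_X_add_C {R : Type*} [CommSemiring R]
    (p : R[X]) (a b : R) (k : ℕ) :
    derivative^[k] (p.comp (C a * X + C b)) =
      C (a ^ k) * (derivative^[k] p).comp (C a * X + C b) := by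
  induction k with
  | zero => simp
  | succ k ih =>
    rw [Function.iterate_succ_apply', ih, derivative_C_mul, derivative_comp,
      Function.iterate_succ_apply']
    simp only [derivative_add, derivative_C_mul_X, derivative_C, add_zero, pow_succ, C_mul]
    ring

theorem iterate_derivative_X_sq_sub_one_pow_eq_C_mul_legendre (n : ℕ) :
    derivative^[n] (((X : ℝ[X]) ^ 2 - 1) ^ n) = C ((2 : ℝ) ^ n * n.factorial) * legendre n := by
  rw [legendre, ← mul_assoc, ← C_mul, mul_one_div_cancel (by positivity), C_1, one_mul]

theorem shiftedLegendre_map_eq_legendre_comp (n : ℕ) :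
    (shiftedLegendre n).map (Int.castRingHom ℝ) = (legendre n).comp (C (-2) * X + C 1) := by
  have hrod := congrArg (map (Int.castRingHom ℝ)) (factorial_mul_shiftedLegendre_eq n)
  simp only [Polynomial.map_mul, Polynomial.map_natCast, ← iterate_derivative_map,
    Polynomial.map_pow, Polynomial.map_X, Polynomial.map_sub, Polynomial.map_one] at hrod
  have hsub : (((X : ℝ[X]) ^ 2 - 1) ^ n).comp (C (-2) * X + C 1) =
      C ((-4) ^ n) * (X ^ n * (1 - X) ^ n) := by
    simp only [pow_comp, sub_comp, X_comp, one_comp, C_pow, ← mul_pow, map_neg, map_ofNat, C_1]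
    ring
  have hchain := iterate_derivative_comp_C_mul_X_add_C (((X : ℝ[X]) ^ 2 - 1) ^ n) (-2) 1 n
  rw [hsub, iterate_derivative_C_mul, ← hrod,
    iterate_derivative_X_sq_sub_one_pow_eq_C_mul_legendre, mul_comp, C_comp, ← mul_assoc,
    ← mul_assoc, ← C_mul, ← C_eq_natCast, ← C_mul, ← mul_assoc, ← mul_pow,
    show (-2 : ℝ) * 2 = -4 by norm_num] at hchain
  have hc : (-4 : ℝ) ^ n * n.factorial ≠ 0 :=
    mul_ne_zero (pow_ne_zero _ (by norm_num)) (Nat.cast_ne_zero.mpr n.factorial_ne_zero)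
  exact mul_left_cancel₀ (C_ne_zero.mpr hc) hchain

theorem legendre_eval_eq_aeval_shiftedLegendre (n : ℕ) (x : ℝ) :
    (legendre n).eval x = aeval ((1 - x) / 2) (shiftedLegendre n) := by
  rw [← eval_map_algebraMap, algebraMap_int_eq, shiftedLegendre_map_eq_legendre_comp, eval_comp]
  congr 1
  simp only [eval_add, eval_mul, eval_C, eval_X]
  ring

/-- `∑_{j=0}^{n} C(n+j, j) * C(n, j) * ((x-1)/2)^j` equals the `n`-th Legendre
polynomial evaluated at `x`. -/
theorem sum_faces_eq_legendre (n : ℕ) (x : ℝ) :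
    ∑ j ∈ Finset.range (n + 1),
      ((n + j).choose j * n.choose j : ℝ) * ((x - 1) / 2) ^ j =
      (legendre n).eval x := by
  rw [legendre_eval_eq_aeval_shiftedLegendre, shiftedLegendre, map_sum]
  refine Finset.sum_congr rfl fun j _ => ?_
  rw [map_mul, aeval_C, map_pow, aeval_X, algebraMap_int_eq, eq_intCast]
  push_cast
  rw [Nat.choose_symm_add, show (x - 1) / 2 = -((1 - x) / 2) by ring, neg_pow]
  ring
end

section
/- Let I and J be nonempty disjoint subsets of {1,...,n+1}. Then the convex hull of the set of points {e_j - e_i : i ∈ I, j ∈ J} in R^{n+1} has dimension |I| + |J| - 2. -/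
/-!
The points `e_j - e_i` form the Minkowski difference `{e_j : j ∈ J} - {e_i : i ∈ I}` of two
faces of the standard simplex. The vector span of a difference of nonempty sets is the sum of
their vector spans, here of dimensions `|J| - 1` and `|I| - 1`, and this sum is direct because
the two spans live on the disjoint coordinate sets `J` and `I`.
-/

open Module Pointwise

section

variable {k V : Type*} [Ring k] [AddCommGroup V] [Module k V]

theorem vectorSpan_le_span (s : Set V) : vectorSpan k s ≤ Submodule.span k s :=
  Submodule.span_le.2 fun _ ⟨_, ha, _, hb, hab⟩ =>
    hab ▸ sub_mem (Submodule.subset_span ha) (Submodule.subset_span hb)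

theorem vectorSpan_sub {s t : Set V} (hs : s.Nonempty) (ht : t.Nonempty) :
    vectorSpan k (s - t) = vectorSpan k s ⊔ vectorSpan k t := by
  obtain ⟨a₀, ha₀⟩ := hs
  obtain ⟨b₀, hb₀⟩ := ht
  apply le_antisymm
  · refine Submodule.span_le.2 ?_
    rintro _ ⟨_, ⟨a, ha, b, hb, rfl⟩, _, ⟨a', ha', b', hb', rfl⟩, rfl⟩
    have hab : (a - b) -ᵥ (a' - b') = (a -ᵥ a') - (b -ᵥ b') := by
      simp only [vsub_eq_sub]; abel
    show (a - b) -ᵥ (a' - b') ∈ _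
    rw [hab]
    exact Submodule.sub_mem_sup (vsub_mem_vectorSpan k ha ha') (vsub_mem_vectorSpan k hb hb')
  · refine sup_le (Submodule.span_le.2 ?_) (Submodule.span_le.2 ?_)
    · rintro _ ⟨a, ha, a', ha', rfl⟩
      have h : a -ᵥ a' = (a - b₀) -ᵥ (a' - b₀) := by simp only [vsub_eq_sub]; abel
      show a -ᵥ a' ∈ _
      rw [h]
      exact vsub_mem_vectorSpan k (Set.sub_mem_sub ha hb₀) (Set.sub_mem_sub ha' hb₀)
    · rintro _ ⟨b, hb, b', hb', rfl⟩
      have h : b -ᵥ b' = (a₀ - b') -ᵥ (a₀ - b) := by simp only [vsub_eq_sub]; abel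
      show b -ᵥ b' ∈ _
      rw [h]
      exact vsub_mem_vectorSpan k (Set.sub_mem_sub ha₀ hb') (Set.sub_mem_sub ha₀ hb)

end

section

variable {k V ι : Type*} [DivisionRing k] [AddCommGroup V] [Module k V] {v : ι → V}

theorem LinearIndependent.finrank_vectorSpan_image_finset (hv : LinearIndependent k v)
    {s : Finset ι} (hs : s.Nonempty) :
    finrank k (vectorSpan k (v '' s)) = s.card - 1 := by
  classical
  rw [← Finset.coe_image]
  exact hv.affineIndependent.finrank_vectorSpan_image_finset (by have := hs.card_pos; omega)

theorem LinearIndependent.finrank_vectorSpan_image_sub_image (hv : LinearIndependent k v)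
    {I J : Finset ι} (hI : I.Nonempty) (hJ : J.Nonempty) (hIJ : Disjoint I J) :
    finrank k (vectorSpan k (v '' J - v '' I)) = I.card + J.card - 2 := by
  have := finiteDimensional_vectorSpan_of_finite k (I.finite_toSet.image v)
  have := finiteDimensional_vectorSpan_of_finite k (J.finite_toSet.image v)
  have hdisj : Disjoint (vectorSpan k (v '' J)) (vectorSpan k (v '' I)) :=
    (hv.disjoint_span_image (Finset.disjoint_coe.2 hIJ.symm)).mono
      (vectorSpan_le_span _) (vectorSpan_le_span _)
  have hsup := Submodule.finrank_sup_add_finrank_inf_eq (vectorSpan k (v '' J))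
    (vectorSpan k (v '' I))
  rw [hdisj.eq_bot, finrank_bot, add_zero] at hsup
  rw [vectorSpan_sub ((Finset.coe_nonempty.2 hJ).image v) ((Finset.coe_nonempty.2 hI).image v),
    hsup, hv.finrank_vectorSpan_image_finset hJ, hv.finrank_vectorSpan_image_finset hI]
  have := hI.card_pos
  have := hJ.card_pos
  omega

end

/-- Let `I` and `J` be nonempty disjoint subsets of `{1,...,n+1}`. The convex hull of
the points `e_j - e_i` for `i ∈ I`, `j ∈ J` in `ℝ^{n+1}` has dimension
`|I| + |J| - 2` (dimension meaning the dimension of its affine hull, i.e. the rank of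
its `vectorSpan`). -/
theorem dim_face_of_legendre_polytope (n : ℕ) (I J : Finset (Fin (n + 1)))
    (hI : I.Nonempty) (hJ : J.Nonempty) (hIJ : Disjoint I J) :
    Module.finrank ℝ (vectorSpan ℝ (convexHull ℝ
        {p : Fin (n + 1) → ℝ | ∃ i ∈ I, ∃ j ∈ J,
          p = Pi.single j (1 : ℝ) - Pi.single i (1 : ℝ)})) =
      I.card + J.card - 2 := by
  have hS : {p : Fin (n + 1) → ℝ | ∃ i ∈ I, ∃ j ∈ J,
      p = Pi.single j (1 : ℝ) - Pi.single i (1 : ℝ)} =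
      (fun j => Pi.single j 1) '' J - (fun i => Pi.single i 1) '' I := by
    ext p
    constructor
    · rintro ⟨i, hi, j, hj, rfl⟩
      exact ⟨_, ⟨j, hj, rfl⟩, _, ⟨i, hi, rfl⟩, rfl⟩
    · rintro ⟨_, ⟨j, hj, rfl⟩, _, ⟨i, hi, rfl⟩, rfl⟩
      exact ⟨i, hi, j, hj, rfl⟩
  rw [← direction_affineSpan, affineSpan_convexHull, direction_affineSpan, hS]
  exact (Pi.linearIndependent_single_one _ ℝ).finrank_vectorSpan_image_sub_image hI hJ hIJ
end

section
/- Every facet of Simion's type B associahedron Γ_n^B contains exactly one diameter, i.e., exactly one B-diagonal of the form {i, ī} joining antipodal points of the (2n+2)-gon. -/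
/-- `x` lies strictly inside the clockwise arc from `a` to `b` on the
`(2n+2)`-gon with vertices `ZMod (2n+2)`. -/
def StrictlyBetween (n : ℕ) (a x b : ZMod (2 * n + 2)) : Prop :=
  0 < (x - a).val ∧ (x - a).val < (b - a).val

/-- Two chords of the `(2n+2)`-gon cross (intersect in the interior of the
polygon): there are labelings `p = {a,b}`, `q = {c,d}` with `c` strictly inside the
arc from `a` to `b` and `d` strictly inside the arc from `b` to `a`. -/
def ChordsCross (n : ℕ) (p q : Sym2 (ZMod (2 * n + 2))) : Prop :=
  ∃ a b c d : ZMod (2 * n + 2), p = s(a, b) ∧ q = s(c, d) ∧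
    StrictlyBetween n a c b ∧ StrictlyBetween n b d a

/-- The antipodal map on chords of the `(2n+2)`-gon. -/
def antipodalChord (n : ℕ) (p : Sym2 (ZMod (2 * n + 2))) : Sym2 (ZMod (2 * n + 2)) :=
  Sym2.map (fun x => x + (n + 1 : ℕ)) p

/-- `p` is a diagonal of the `(2n+2)`-gon: a chord whose endpoints are distinct and
nonadjacent. -/
def IsPolygonDiagonal (n : ℕ) (p : Sym2 (ZMod (2 * n + 2))) : Prop :=
  ∃ a b : ZMod (2 * n + 2), p = s(a, b) ∧ 2 ≤ (b - a).val ∧ 2 ≤ (a - b).val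

/-- A face of Simion's type `B` associahedron `Γ_n^B`, viewed as the collection of
all diagonals occurring in a set of pairwise noncrossing `B`-diagonals: a set of
diagonals of the `(2n+2)`-gon that is closed under the antipodal map and pairwise
noncrossing. -/
def IsSimionFace (n : ℕ) (S : Finset (Sym2 (ZMod (2 * n + 2)))) : Prop :=
  (∀ p ∈ S, IsPolygonDiagonal n p ∧ antipodalChord n p ∈ S) ∧
    (∀ p ∈ S, ∀ q ∈ S, p ≠ q → ¬ ChordsCross n p q)

/-!
Reading `(y - x).val` as the length of the clockwise arc from `x` to `y`, arc lengths are
additive up to a multiple of `2n + 2`, so questions about crossings become linear arithmetic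
on arc lengths.

Two distinct diameters always cross, so a face contains at most one diameter. For existence,
take a diagonal `{a, b}` of the face whose shorter arc `a → b` is as long as possible, and the
diameter through `b`. A diagonal of the face crossing this diameter has an endpoint on each side
of it; of that diagonal and its antipodal image, the one whose shorter arc contains `b` has
that arc no longer than the arc `a → b`, hence crosses `{a, b}`. So the diameter crosses nothing
in the face, and maximality forces it into the face.
-/

namespace ZMod

variable {m : ℕ} [NeZero m]

theorem val_sub_add_val_sub (x y z : ZMod m) :
    (y - x).val + (z - y).val = (z - x).val ∨ (y - x).val + (z - y).val = (z - x).val + m := by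
  have hsum : (y - x + (z - y)).val = ((y - x).val + (z - y).val) % m := val_add _ _
  rw [sub_add_sub_cancel'] at hsum
  have := (y - x).val_lt
  have := (z - y).val_lt
  by_cases h : (y - x).val + (z - y).val < m
  · rw [Nat.mod_eq_of_lt h] at hsum
    omega
  · rw [Nat.mod_eq_sub_mod (by omega), Nat.mod_eq_of_lt (by omega)] at hsum
    omega

theorem val_sub_add_val_sub_of_ne {a b : ZMod m} (h : a ≠ b) :
    (b - a).val + (a - b).val = m := by
  have hba : 0 < (b - a).val := val_pos.mpr (sub_ne_zero.mpr h.symm)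
  have := val_sub_add_val_sub a b a
  rw [sub_self, val_zero] at this
  omega

end ZMod

instance (n : ℕ) : NeZero (2 * n + 2) := ⟨by omega⟩

variable {n : ℕ}

def diameter (n : ℕ) (x : ZMod (2 * n + 2)) : Sym2 (ZMod (2 * n + 2)) :=
  s(x, x + (n + 1 : ℕ))

-- Adding `n + 1` turns the polygon by half a turn: it is the antipodal map.
theorem val_halfTurn : ((n + 1 : ℕ) : ZMod (2 * n + 2)).val = n + 1 :=
  ZMod.val_natCast_of_lt (by omega)

theorem halfTurn_ne_zero : ((n + 1 : ℕ) : ZMod (2 * n + 2)) ≠ 0 := by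
  intro h
  have := val_halfTurn (n := n)
  rw [h, ZMod.val_zero] at this
  omega

theorem halfTurn_add_halfTurn : ((n + 1 : ℕ) : ZMod (2 * n + 2)) + (n + 1 : ℕ) = 0 := by
  rw [← Nat.cast_add, show n + 1 + (n + 1) = 2 * n + 2 by ring, ZMod.natCast_self]

theorem add_halfTurn_add_halfTurn (x : ZMod (2 * n + 2)) :
    x + (n + 1 : ℕ) + (n + 1 : ℕ) = x := by
  rw [add_assoc, halfTurn_add_halfTurn, add_zero]

theorem diameter_add_halfTurn (x : ZMod (2 * n + 2)) :
    diameter n (x + (n + 1 : ℕ)) = diameter n x := by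
  rw [diameter, add_halfTurn_add_halfTurn]
  exact Sym2.eq_swap

theorem antipodalChord_diameter (x : ZMod (2 * n + 2)) :
    antipodalChord n (diameter n x) = diameter n x := by
  rw [antipodalChord, diameter, Sym2.map_mk]
  exact diameter_add_halfTurn x

theorem exists_eq_diameter_of_antipodalChord_eq {p : Sym2 (ZMod (2 * n + 2))}
    (h : antipodalChord n p = p) : ∃ x, p = diameter n x := by
  induction p using Sym2.ind with
  | _ x y =>
    rw [antipodalChord, Sym2.map_mk, Sym2.eq_iff] at h
    rcases h with ⟨h, -⟩ | ⟨h, -⟩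
    · exact absurd (add_eq_left.mp h) halfTurn_ne_zero
    · exact ⟨x, by rw [diameter, h]⟩

theorem isPolygonDiagonal_diameter (hn : 1 ≤ n) (x : ZMod (2 * n + 2)) :
    IsPolygonDiagonal n (diameter n x) := by
  refine ⟨x, x + (n + 1 : ℕ), rfl, ?_, ?_⟩
  · rw [add_sub_cancel_left, val_halfTurn]
    omega
  · rw [sub_add_cancel_left, neg_eq_of_add_eq_zero_right halfTurn_add_halfTurn, val_halfTurn]
    omega

namespace StrictlyBetween

variable {a x b y : ZMod (2 * n + 2)}

theorem add_right (h : StrictlyBetween n a x b) (t : ZMod (2 * n + 2)) :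
    StrictlyBetween n (a + t) (x + t) (b + t) := by
  simpa only [StrictlyBetween, add_sub_add_right_eq_sub] using h

theorem rotate (h₁ : StrictlyBetween n a x b) (h₂ : StrictlyBetween n b y a) :
    StrictlyBetween n x b y := by
  obtain ⟨hxa, hxb⟩ := h₁
  obtain ⟨hyb, hya⟩ := h₂
  have hab : a ≠ b := by
    rintro rfl
    rw [sub_self, ZMod.val_zero] at hxb
    omega
  have := ZMod.val_sub_add_val_sub_of_ne hab
  have := ZMod.val_sub_add_val_sub a x b
  have := ZMod.val_sub_add_val_sub x b y
  have := (y - x).val_lt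
  have := (b - x).val_lt
  exact ⟨by omega, by omega⟩

end StrictlyBetween

theorem strictlyBetween_or_strictlyBetween {a x b : ZMod (2 * n + 2)} (hab : a ≠ b)
    (hxa : x ≠ a) (hxb : x ≠ b) : StrictlyBetween n a x b ∨ StrictlyBetween n b x a := by
  have hpos : 0 < (x - a).val := ZMod.val_pos.mpr (sub_ne_zero.mpr hxa)
  have hne : (x - a).val ≠ (b - a).val := fun h => hxb (sub_left_inj.mp (ZMod.val_injective _ h))
  have := ZMod.val_sub_add_val_sub_of_ne hab
  have := ZMod.val_sub_add_val_sub a b x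
  have := (x - a).val_lt
  have := (x - b).val_lt
  by_cases h : (x - a).val < (b - a).val
  · exact Or.inl ⟨hpos, h⟩
  · exact Or.inr ⟨by omega, by omega⟩

theorem not_chordsCross_self (p : Sym2 (ZMod (2 * n + 2))) : ¬ ChordsCross n p p := by
  rintro ⟨a, b, c, d, rfl, hcd, ⟨hpos, hlt⟩, -⟩
  rcases Sym2.eq_iff.mp hcd with ⟨rfl, -⟩ | ⟨-, rfl⟩
  · rw [sub_self, ZMod.val_zero] at hpos
    omega
  · exact lt_irrefl _ hlt

theorem ChordsCross.symm {p q : Sym2 (ZMod (2 * n + 2))} (h : ChordsCross n p q) :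
    ChordsCross n q p := by
  obtain ⟨a, b, c, d, rfl, rfl, h₁, h₂⟩ := h
  exact ⟨c, d, b, a, rfl, Sym2.eq_swap, h₁.rotate h₂, h₂.rotate h₁⟩

theorem IsSimionFace.not_chordsCross {S : Finset (Sym2 (ZMod (2 * n + 2)))}
    (hS : IsSimionFace n S) {p q : Sym2 (ZMod (2 * n + 2))} (hp : p ∈ S) (hq : q ∈ S) :
    ¬ ChordsCross n p q := by
  by_cases hpq : p = q
  · exact hpq ▸ not_chordsCross_self p
  · exact hS.2 p hp q hq hpq

theorem chordsCross_diameter_of_strictlyBetween {x z : ZMod (2 * n + 2)}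
    (h : StrictlyBetween n x z (x + (n + 1 : ℕ))) :
    ChordsCross n (diameter n x) (diameter n z) := by
  refine ⟨x, x + (n + 1 : ℕ), z, z + (n + 1 : ℕ), rfl, rfl, h, ?_⟩
  simpa only [add_halfTurn_add_halfTurn] using h.add_right (n + 1 : ℕ)

theorem chordsCross_diameter_of_ne {x z : ZMod (2 * n + 2)} (h : diameter n x ≠ diameter n z) :
    ChordsCross n (diameter n x) (diameter n z) := by
  have hzx : z ≠ x := by
    rintro rfl
    exact h rfl
  have hzx' : z ≠ x + (n + 1 : ℕ) := by
    rintro rfl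
    exact h (diameter_add_halfTurn x).symm
  rcases strictlyBetween_or_strictlyBetween (add_ne_left.mpr halfTurn_ne_zero).symm hzx hzx'
    with hz | hz
  · exact chordsCross_diameter_of_strictlyBetween hz
  · rw [← diameter_add_halfTurn z]
    apply chordsCross_diameter_of_strictlyBetween
    simpa only [add_halfTurn_add_halfTurn] using hz.add_right (n + 1 : ℕ)

theorem ChordsCross.exists_strictlyBetween_of_diameter {b : ZMod (2 * n + 2)}
    {q : Sym2 (ZMod (2 * n + 2))} (h : ChordsCross n (diameter n b) q) :
    ∃ u v, q = s(u, v) ∧ StrictlyBetween n b u (b + (n + 1 : ℕ)) ∧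
      StrictlyBetween n (b + (n + 1 : ℕ)) v b := by
  obtain ⟨x, y, u, v, hxy, rfl, hu, hv⟩ := h
  rcases Sym2.eq_iff.mp hxy with ⟨rfl, rfl⟩ | ⟨rfl, rfl⟩
  · exact ⟨u, v, rfl, hu, hv⟩
  · exact ⟨v, u, Sym2.eq_swap, hv, hu⟩

theorem chordsCross_of_strictlyBetween {a b u v : ZMod (2 * n + 2)}
    (hab : (b - a).val ≤ (a - b).val) (hb : StrictlyBetween n u b v)
    (huv : (v - u).val ≤ (b - a).val) : ChordsCross n s(a, b) s(u, v) := by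
  obtain ⟨hbu, hbv⟩ := hb
  have := ZMod.val_sub_add_val_sub u b v
  have := ZMod.val_sub_add_val_sub a u b
  have := (u - a).val_lt
  have := (v - b).val_lt
  exact ⟨a, b, u, v, rfl, rfl, ⟨by omega, by omega⟩, ⟨by omega, by omega⟩⟩

def chordLength {m : ℕ} : Sym2 (ZMod m) → ℕ :=
  Sym2.lift ⟨fun a b => min (b - a).val (a - b).val, fun _ _ => min_comm _ _⟩

theorem chordLength_mk {m : ℕ} (a b : ZMod m) :
    chordLength s(a, b) = min (b - a).val (a - b).val :=
  rfl

theorem Sym2.exists_eq_mk_val_sub_le {m : ℕ} (p : Sym2 (ZMod m)) :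
    ∃ a b, p = s(a, b) ∧ (b - a).val ≤ (a - b).val := by
  induction p using Sym2.ind with
  | _ a b =>
    rcases le_total (b - a).val (a - b).val with h | h
    · exact ⟨a, b, rfl, h⟩
    · exact ⟨b, a, Sym2.eq_swap, h⟩

theorem IsSimionFace.exists_diameter_forall_not_chordsCross
    {S : Finset (Sym2 (ZMod (2 * n + 2)))} (hS : IsSimionFace n S) :
    ∃ x, ∀ q ∈ S, ¬ ChordsCross n (diameter n x) q := by
  rcases S.eq_empty_or_nonempty with rfl | hSne
  · exact ⟨0, by simp⟩
  obtain ⟨p, hpS, hpmax⟩ := S.exists_max_image chordLength hSne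
  obtain ⟨a, b, rfl, hab⟩ := p.exists_eq_mk_val_sub_le
  refine ⟨b, fun q hqS hcross => ?_⟩
  obtain ⟨u, v, rfl, hu, hv⟩ := hcross.exists_strictlyBetween_of_diameter
  have hlen : min (v - u).val (u - v).val ≤ (b - a).val := by
    simpa only [chordLength_mk, min_eq_left hab] using hpmax _ hqS
  obtain ⟨u', v', hq'S, hb, hlen'⟩ : ∃ u' v', s(u', v') ∈ S ∧ StrictlyBetween n u' b v' ∧
      (v' - u').val ≤ (b - a).val := by
    rcases le_total (u - v).val (v - u).val with h | h
    · exact ⟨v, u, Sym2.eq_swap ▸ hqS, hv.rotate hu, by omega⟩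
    · refine ⟨u + (n + 1 : ℕ), v + (n + 1 : ℕ), (hS.1 _ hqS).2, ?_, ?_⟩
      · simpa only [add_halfTurn_add_halfTurn] using (hu.rotate hv).add_right (n + 1 : ℕ)
      · rw [add_sub_add_right_eq_sub]
        omega
  exact hS.not_chordsCross hpS hq'S (chordsCross_of_strictlyBetween hab hb hlen')

theorem IsSimionFace.insert_diameter {S : Finset (Sym2 (ZMod (2 * n + 2)))} (hn : 1 ≤ n)
    (hS : IsSimionFace n S) {x : ZMod (2 * n + 2)}
    (hx : ∀ q ∈ S, ¬ ChordsCross n (diameter n x) q) :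
    IsSimionFace n (insert (diameter n x) S) := by
  refine ⟨fun p hp => ?_, fun p hp q hq hpq => ?_⟩
  · rcases Finset.mem_insert.mp hp with rfl | hp
    · rw [antipodalChord_diameter]
      exact ⟨isPolygonDiagonal_diameter hn x, Finset.mem_insert_self _ _⟩
    · exact ⟨(hS.1 p hp).1, Finset.mem_insert_of_mem (hS.1 p hp).2⟩
  · rcases Finset.mem_insert.mp hp with rfl | hp <;> rcases Finset.mem_insert.mp hq with rfl | hq
    · exact absurd rfl hpq
    · exact hx q hq
    · exact fun h => hx p hp h.symm
    · exact hS.2 p hp q hq hpq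

/-- Every facet of Simion's type `B` associahedron `Γ_n^B` contains exactly one
diameter, i.e. exactly one `B`-diagonal `{i, ī}` joining antipodal points (these are
the chords fixed by the antipodal map). -/
theorem simion_facet_has_unique_diameter (n : ℕ) (hn : 1 ≤ n)
    (S : Finset (Sym2 (ZMod (2 * n + 2)))) (hface : IsSimionFace n S)
    (hmax : ∀ T : Finset (Sym2 (ZMod (2 * n + 2))), IsSimionFace n T → S ⊆ T → S = T) :
    ∃! p, p ∈ S ∧ antipodalChord n p = p := by
  obtain ⟨x, hx⟩ := hface.exists_diameter_forall_not_chordsCross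
  have hxS : diameter n x ∈ S := by
    rw [hmax _ (hface.insert_diameter hn hx) (Finset.subset_insert _ _)]
    exact Finset.mem_insert_self _ _
  refine ⟨diameter n x, ⟨hxS, antipodalChord_diameter x⟩, ?_⟩
  rintro q ⟨hqS, hq⟩
  obtain ⟨z, rfl⟩ := exists_eq_diameter_of_antipodalChord_eq hq
  by_contra hne
  exact hface.not_chordsCross hqS hxS (chordsCross_diameter_of_ne hne)
end

section
/- The recursively defined map SP is a bijection between the set of valid digraphs consisting only of backward arrows on an (n+1)-element linearly ordered node set and the set of Schröder words of length 2n; moreover, a digraph with exactly k backward arrows maps to a word with exactly k letters U and k letters D. -/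
/-- The letters of Delannoy/Schröder words: `U` (up, length 1), `D` (down,
length 1), `H` (horizontal, length 2). -/
inductive DLetter : Type
  | U : DLetter
  | D : DLetter
  | H : DLetter
  deriving DecidableEq

/-- The length of the lattice path encoded by a word (`U`, `D` count 1, `H`
counts 2). -/
def wordLength (w : List DLetter) : ℕ :=
  w.count DLetter.U + w.count DLetter.D + 2 * w.count DLetter.H

/-- A Schröder word: in every prefix the number of `D`'s is at most the number of
`U`'s (the path never goes below the axis), and altogether `U`'s and `D`'s are
equinumerous (the path is balanced). -/
def IsSchroederWord (w : List DLetter) : Prop :=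
  w.count DLetter.U = w.count DLetter.D ∧
    ∀ p : List DLetter, p <+: w → p.count DLetter.D ≤ p.count DLetter.U

/-- The restriction of a digraph to the induced subgraph on a set `W` of nodes. -/
def restr (A : Finset (ℕ × ℕ)) (W : Finset ℕ) : Finset (ℕ × ℕ) :=
  A.filter (fun p => p.1 ∈ W ∧ p.2 ∈ W)

/-- The recursively defined map `SP` from digraphs of backward arrows on a finite
node set `V ⊆ ℕ` to Schröder words: for a single node it is the empty word; if the
least node `v` is isolated, `SP(A) = H · SP(A restricted to V−{v})`; otherwise,
`w` being the least node with an arrow into `v`,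
`SP(A) = U · SP(A on V ∩ (v,w]) · D · SP(A on V − (v,w])`. -/
def SP (V : Finset ℕ) (A : Finset (ℕ × ℕ)) : List DLetter :=
  if h : V.Nonempty then
    if V.card = 1 then []
    else
      let v := V.min' h
      let T := V.filter (fun x => v < x ∧ (x, v) ∈ A)
      if hT : T.Nonempty then
        let w := T.min' hT
        let V₁ := V.filter (fun x => v < x ∧ x ≤ w)
        let V₂ := V.filter (fun x => ¬(v < x ∧ x ≤ w))
        DLetter.U :: (SP V₁ (restr A V₁) ++ DLetter.D :: SP V₂ (restr A V₂))
      else DLetter.H :: SP (V.erase v) (restr A (V.erase v))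
  else []
termination_by V.card
decreasing_by
  · refine Finset.card_lt_card ⟨Finset.filter_subset _ _, fun hsub => ?_⟩
    have hv := V.min'_mem h
    have := hsub hv
    simp at this
  · have hw : T.min' hT ∈ T := T.min'_mem hT
    simp only [T, Finset.mem_filter] at hw
    refine Finset.card_lt_card ⟨Finset.filter_subset _ _, fun hsub => ?_⟩
    have := hsub hw.1
    simp only [Finset.mem_filter] at this
    exact this.2 ⟨hw.2.1, le_refl _⟩
  · exact Finset.card_erase_lt_of_mem (V.min'_mem h)

/-- A valid digraph of backward arrows on the node set `V`: each arrow `(x,y)` has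
`x, y ∈ V` with `x > y`, no two arrows cross, and no node is both the head of one
arrow and the tail of another. -/
def IsValidBackward (V : Finset ℕ) (A : Finset (ℕ × ℕ)) : Prop :=
  (∀ p ∈ A, p.1 ∈ V ∧ p.2 ∈ V ∧ p.2 < p.1) ∧
    (∀ p ∈ A, ∀ q ∈ A,
      ¬((p.2 < q.2 ∧ q.2 < p.1 ∧ p.1 < q.1) ∨ (q.2 < p.2 ∧ p.2 < q.1 ∧ q.1 < p.1))) ∧
    (∀ p ∈ A, ∀ q ∈ A, p.2 ≠ q.1)

/-! `SP` is the first-return decomposition of Schröder paths read on digraphs. A Schröder word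
is empty, `H r`, or `U s D t` with `s`, `t` Schröder words, and this decomposition is unique.
Dually, let `v` be the least node of a valid digraph. Either no arrow enters `v`, or, if `w` is
the least tail of an arrow into `v`, then non-crossing and the head/tail condition confine every
other arrow to `V ∩ (v, w]` or to `V − (v, w]`. So the digraph is determined by `w` and its two
restrictions, and `w` is determined by the length `2 (#(V ∩ (v, w]) - 1)` of the first factor.
Induction on `#V` then gives injectivity, and running the decomposition backwards gives
surjectivity; each arrow contributes exactly one `U` and one `D`. -/

open DLetter
open scoped Finset

lemma List.IsPrefix.prefix_or_eq_append {α : Type*} {p s l : List α} (h : p <+: s ++ l) :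
    p <+: s ∨ ∃ q, q <+: l ∧ p = s ++ q := by
  rcases List.prefix_or_prefix_of_prefix h (List.prefix_append s l) with hps | ⟨q, rfl⟩
  · exact Or.inl hps
  · exact Or.inr ⟨q, (List.prefix_append_right_inj s).mp h, rfl⟩

lemma Finset.exists_card_filter_le_eq {α : Type*} [LinearOrder α] (s : Finset α) {k : ℕ}
    (hk : k < #s) : ∃ w ∈ s, #{x ∈ s | x ≤ w} = k + 1 := by
  classical
  induction s using Finset.induction_on_max with
  | empty => simp at hk
  | insert a s ha ih =>
    rw [Finset.card_insert_of_notMem fun h => (ha a h).false] at hk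
    rcases (Nat.lt_succ_iff.mp hk).lt_or_eq with hk | rfl
    · obtain ⟨w, hw, hcard⟩ := ih hk
      refine ⟨w, Finset.mem_insert_of_mem hw, ?_⟩
      rw [Finset.filter_insert, if_neg (ha w hw).not_ge, hcard]
    · refine ⟨a, Finset.mem_insert_self a s, ?_⟩
      rw [Finset.filter_true_of_mem fun x hx => ?_,
        Finset.card_insert_of_notMem fun h => (ha a h).false]
      rcases Finset.mem_insert.mp hx with rfl | hx
      exacts [le_rfl, (ha x hx).le]

lemma Finset.strictMonoOn_card_filter_le {α : Type*} [LinearOrder α] (s : Finset α) :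
    StrictMonoOn (fun w => #{x ∈ s | x ≤ w}) s := fun w _ w' hw' hlt =>
  Finset.card_lt_card <| Finset.ssubset_iff_subset_ne.mpr
    ⟨Finset.monotone_filter_right s fun _ _ h => h.trans hlt.le, fun h => by
      have : w' ∈ ({x ∈ s | x ≤ w} : Finset α) :=
        h ▸ Finset.mem_filter.mpr ⟨hw', le_rfl⟩
      exact (Finset.mem_filter.mp this).2.not_gt hlt⟩

lemma isSchroederWord_nil : IsSchroederWord [] :=
  ⟨rfl, fun p hp => by simp [List.prefix_nil.mp hp]⟩

lemma not_isSchroederWord_D_cons (r : List DLetter) : ¬IsSchroederWord (D :: r) := fun h => by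
  simpa using h.2 [D] (List.prefix_cons_iff.mpr (Or.inr ⟨[], rfl, List.nil_prefix⟩))

lemma isSchroederWord_H_cons_iff {r : List DLetter} :
    IsSchroederWord (H :: r) ↔ IsSchroederWord r := by
  simp only [IsSchroederWord, List.prefix_cons_iff, forall_eq_or_imp, List.count_nil, le_refl,
    true_and]
  constructor
  · rintro ⟨hc, hp⟩
    exact ⟨by simpa using hc, fun p hp' => by simpa using hp (H :: p) ⟨p, rfl, hp'⟩⟩
  · rintro ⟨hc, hp⟩
    refine ⟨by simpa using hc, ?_⟩
    rintro _ ⟨q, rfl, hq⟩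
    simpa using hp q hq

lemma isSchroederWord_U_cons_D_append {s t : List DLetter} (hs : IsSchroederWord s)
    (ht : IsSchroederWord t) : IsSchroederWord (U :: (s ++ D :: t)) := by
  refine ⟨by simp [hs.1, ht.1]; omega, ?_⟩
  rintro p hp
  rcases List.prefix_cons_iff.mp hp with rfl | ⟨q, rfl, hq⟩
  · simp
  rcases hq.prefix_or_eq_append with hqs | ⟨q', hq', rfl⟩
  · simpa using (hs.2 q hqs).trans (Nat.le_succ _)
  rcases List.prefix_cons_iff.mp hq' with rfl | ⟨q'', rfl, hq''⟩
  · simp [hs.1]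
  · have := ht.2 q'' hq''
    simp [hs.1]; omega

lemma exists_first_return (r : List DLetter) (c : ℕ) (h : r.count U + c < r.count D) :
    ∃ s t, r = s ++ D :: t ∧ s.count D = s.count U + c ∧
      ∀ p, p <+: s → p.count D ≤ p.count U + c := by
  -- the path `r` starts at height `c`, and `D :: t` is where it first drops below the axis
  induction r generalizing c with
  | nil => simp at h
  | cons a r ih =>
    cases a with
    | U =>
      obtain ⟨s, t, rfl, hs, hp⟩ := ih (c + 1) (by simp at h; omega)
      refine ⟨U :: s, t, rfl, by simp [hs]; omega, ?_⟩
      rintro p hp'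
      rcases List.prefix_cons_iff.mp hp' with rfl | ⟨q, rfl, hq⟩
      · simp
      · simpa [add_assoc, add_comm 1] using hp q hq
    | H =>
      obtain ⟨s, t, rfl, hs, hp⟩ := ih c (by simpa using h)
      refine ⟨H :: s, t, rfl, by simpa using hs, ?_⟩
      rintro p hp'
      rcases List.prefix_cons_iff.mp hp' with rfl | ⟨q, rfl, hq⟩
      · simp
      · simpa using hp q hq
    | D =>
      rcases c with _ | c
      · exact ⟨[], r, rfl, rfl, fun p hp => by simp [List.prefix_nil.mp hp]⟩
      obtain ⟨s, t, rfl, hs, hp⟩ := ih c (by simp at h; omega)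
      refine ⟨D :: s, t, rfl, by simp [hs]; omega, ?_⟩
      rintro p hp'
      rcases List.prefix_cons_iff.mp hp' with rfl | ⟨q, rfl, hq⟩
      · simp
      · have := hp q hq
        simp; omega

lemma IsSchroederWord.exists_eq_append_D_cons {r : List DLetter} (h : IsSchroederWord (U :: r)) :
    ∃ s t, r = s ++ D :: t ∧ IsSchroederWord s ∧ IsSchroederWord t := by
  obtain ⟨s, t, rfl, hs, hp⟩ := exists_first_return r 0 (by have := h.1; simp at this; omega)
  refine ⟨s, t, rfl, ⟨hs.symm, hp⟩, ⟨by have := h.1; simp [hs] at this; omega, ?_⟩⟩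
  intro p hpt
  have := h.2 (U :: (s ++ D :: p)) (by simpa using hpt)
  simp [hs] at this
  omega

lemma eq_of_append_D_cons_eq {s s' t t' : List DLetter} (hs : IsSchroederWord s)
    (hs' : IsSchroederWord s') (h : s ++ D :: t = s' ++ D :: t') : s = s' ∧ t = t' := by
  suffices ∀ {s s' t t'}, IsSchroederWord s → IsSchroederWord s' →
      s ++ D :: t = s' ++ D :: t' → s.length ≤ s'.length → s = s' by
    have hss : s = s' := (le_total s.length s'.length).elim (this hs hs' h)
      fun hl => (this hs' hs h.symm hl).symm
    subst hss
    exact ⟨rfl, by simpa using h⟩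
  intro s s' t t' hs hs' h hl
  obtain ⟨r, rfl⟩ : s <+: s' :=
    List.prefix_of_prefix_length_le (h ▸ List.prefix_append s _) (List.prefix_append s' _) hl
  -- otherwise `s ++ [D]` is a prefix of `s'` ending below the axis
  cases r with
  | nil => simp
  | cons a r =>
    obtain ⟨rfl, -⟩ : D = a ∧ t = r ++ D :: t' := by simpa using h
    have := hs'.2 (s ++ [D]) (by simp)
    simp [hs.1] at this

theorem IsSchroederWord.induction {motive : ∀ w, IsSchroederWord w → Prop}
    (nil : motive [] isSchroederWord_nil)
    (H_cons : ∀ r (hr : IsSchroederWord r), motive r hr →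
      motive (H :: r) (isSchroederWord_H_cons_iff.mpr hr))
    (U_cons : ∀ s t (hs : IsSchroederWord s) (ht : IsSchroederWord t), motive s hs →
      motive t ht → motive (U :: (s ++ D :: t)) (isSchroederWord_U_cons_D_append hs ht))
    {w : List DLetter} (hw : IsSchroederWord w) : motive w hw := by
  induction hl : w.length using Nat.strong_induction_on generalizing w with
  | _ n ih =>
    match w, hw with
    | [], _ => exact nil
    | D :: r, hw => exact absurd hw (not_isSchroederWord_D_cons r)
    | H :: r, hw =>
      have hr := isSchroederWord_H_cons_iff.mp hw
      exact H_cons r hr (ih _ (by simp [← hl]) hr rfl)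
    | U :: r, hw =>
      obtain ⟨s, t, rfl, hs, ht⟩ := hw.exists_eq_append_D_cons
      exact U_cons s t hs ht (ih _ (by simp [← hl]) hs rfl)
        (ih _ (by simp [← hl]; omega) ht rfl)

lemma wordLength_H_cons (r : List DLetter) : wordLength (H :: r) = wordLength r + 2 := by
  simp [wordLength]; ring

lemma wordLength_U_cons_D_append (s t : List DLetter) :
    wordLength (U :: (s ++ D :: t)) = wordLength s + wordLength t + 2 := by
  simp [wordLength]; ring

lemma IsSchroederWord.wordLength_eq {w : List DLetter} (hw : IsSchroederWord w) :
    wordLength w = 2 * (w.count U + w.count H) := by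
  rw [wordLength, ← hw.1]; ring

def inside (V : Finset ℕ) (v w : ℕ) : Finset ℕ := V.filter (fun x => v < x ∧ x ≤ w)

def outside (V : Finset ℕ) (v w : ℕ) : Finset ℕ := V.filter (fun x => ¬(v < x ∧ x ≤ w))

section Digraph

variable {V W : Finset ℕ} {A A₁ A₂ : Finset (ℕ × ℕ)} {v w : ℕ}

lemma mem_inside {x : ℕ} : x ∈ inside V v w ↔ x ∈ V ∧ v < x ∧ x ≤ w :=
  Finset.mem_filter

lemma mem_outside {x : ℕ} (hv : IsLeast (V : Set ℕ) v) :
    x ∈ outside V v w ↔ x ∈ V ∧ (x = v ∨ w < x) := by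
  simp only [outside, Finset.mem_filter, and_congr_right_iff]
  intro hx
  have := hv.2 hx
  omega

lemma disjoint_inside_outside : Disjoint (inside V v w) (outside V v w) :=
  Finset.disjoint_filter_filter_not _ _ _

lemma card_inside_add_card_outside : #(inside V v w) + #(outside V v w) = #V :=
  Finset.card_filter_add_card_filter_not _

lemma inside_eq_filter_le :
    inside V v w = {x ∈ {x ∈ V | v < x} | x ≤ w} :=
  (Finset.filter_filter _ _ _).symm

lemma filter_lt_eq_erase (hv : IsLeast (V : Set ℕ) v) :
    {x ∈ V | v < x} = V.erase v := by
  ext x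
  simp only [Finset.mem_filter, Finset.mem_erase]
  exact ⟨fun h => ⟨h.2.ne', h.1⟩, fun h => ⟨h.2, (hv.2 h.2).lt_of_ne' h.1⟩⟩

lemma eq_of_card_inside_eq {w' : ℕ} (hw : w ∈ V) (hvw : v < w) (hw' : w' ∈ V)
    (hvw' : v < w') (h : #(inside V v w) = #(inside V v w')) : w = w' := by
  rw [inside_eq_filter_le, inside_eq_filter_le] at h
  exact (Finset.strictMonoOn_card_filter_le _).injOn (by simp [hw, hvw]) (by simp [hw', hvw']) h

lemma isValidBackward_empty (V : Finset ℕ) : IsValidBackward V ∅ := by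
  simp [IsValidBackward]

lemma isValidBackward_restr (hA : IsValidBackward V A) (W : Finset ℕ) :
    IsValidBackward W (restr A W) := by
  simp only [restr, IsValidBackward, Finset.mem_filter, and_imp, Prod.forall] at hA ⊢
  exact ⟨fun x y hxy hx hy => ⟨hx, hy, (hA.1 x y hxy).2.2⟩,
    fun x y hxy _ _ x' y' hxy' _ _ => hA.2.1 x y hxy x' y' hxy',
    fun x y hxy _ _ x' y' hxy' _ _ => hA.2.2 x y hxy x' y' hxy'⟩

lemma IsValidBackward.mono (hA : IsValidBackward W A) (hWV : W ⊆ V) : IsValidBackward V A :=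
  ⟨fun p hp => ⟨hWV (hA.1 p hp).1, hWV (hA.1 p hp).2.1, (hA.1 p hp).2.2⟩, hA.2⟩

lemma restr_eq_self_of_isValidBackward (hA : IsValidBackward V A) : restr A V = A :=
  Finset.filter_true_of_mem fun p hp => ⟨(hA.1 p hp).1, (hA.1 p hp).2.1⟩

lemma restr_eq_empty_of_isValidBackward (hA : IsValidBackward V A) (hVW : Disjoint V W) :
    restr A W = ∅ :=
  Finset.filter_false_of_mem fun p hp h => Finset.disjoint_left.mp hVW (hA.1 p hp).1 h.1

lemma restr_insert_of_notMem {a : ℕ × ℕ} (ha : ¬(a.1 ∈ W ∧ a.2 ∈ W)) :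
    restr (insert a A) W = restr A W := by
  rw [restr, Finset.filter_insert, if_neg ha, restr]

lemma IsValidBackward.eq_empty_of_card_le_one (hA : IsValidBackward V A) (hV : #V ≤ 1) :
    A = ∅ :=
  Finset.eq_empty_of_forall_notMem fun p hp =>
    let ⟨h1, h2, h12⟩ := hA.1 p hp
    h12.ne' (Finset.card_le_one.mp hV _ h1 _ h2)

lemma IsValidBackward.erase_of_isolated (hA : IsValidBackward V A) (hv : IsLeast (V : Set ℕ) v)
    (hiso : ∀ x ∈ V, v < x → (x, v) ∉ A) : IsValidBackward (V.erase v) A := by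
  refine ⟨fun p hp => ?_, hA.2⟩
  obtain ⟨h1, h2, h12⟩ := hA.1 p hp
  have hv2 : v ≤ p.2 := hv.2 h2
  have hne : p.2 ≠ v := fun he => hiso p.1 h1 (he ▸ h12) (he ▸ hp)
  exact ⟨Finset.mem_erase.mpr ⟨by omega, h1⟩, Finset.mem_erase.mpr ⟨hne, h2⟩, h12⟩

lemma IsValidBackward.eq_insert_restr_union (hA : IsValidBackward V A)
    (hv : IsLeast (V : Set ℕ) v) (hw : IsLeast ↑(V.filter fun x => v < x ∧ (x, v) ∈ A) w) :
    A = insert (w, v) (restr A (inside V v w) ∪ restr A (outside V v w)) := by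
  obtain ⟨hwV, hvw, hwA⟩ := Finset.mem_filter.mp hw.1
  refine subset_antisymm (fun p hp => ?_) (Finset.insert_subset hwA
    (Finset.union_subset (Finset.filter_subset _ _) (Finset.filter_subset _ _)))
  obtain ⟨h1, h2, h12⟩ := hA.1 p hp
  have hv2 : v ≤ p.2 := hv.2 h2
  simp only [Finset.mem_insert, Finset.mem_union, restr, Finset.mem_filter, mem_inside,
    mem_outside hv]
  rcases hv2.eq_or_lt with hv2 | hv2
  · have : w ≤ p.1 := hw.2 (Finset.mem_filter.mpr ⟨h1, hv2 ▸ h12, hv2 ▸ hp⟩)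
    rcases this.eq_or_lt with rfl | hw1
    · exact Or.inl (Prod.ext rfl hv2.symm)
    · exact Or.inr (Or.inr ⟨hp, ⟨h1, Or.inr hw1⟩, ⟨h2, Or.inl hv2.symm⟩⟩)
  · have hne : p.2 ≠ w := hA.2.2 p hp (w, v) hwA
    -- `p` may not cross `(w, v)`, so a head in `(v, w)` forces the tail into `(v, w]`
    have hcross := hA.2.1 (w, v) hwA p hp
    simp only at hcross
    rcases lt_or_gt_of_ne hne with hw2 | hw2
    · exact Or.inr (Or.inl ⟨hp, ⟨h1, by omega, by omega⟩, ⟨h2, hv2, hw2.le⟩⟩)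
    · exact Or.inr (Or.inr ⟨hp, ⟨h1, Or.inr (by omega)⟩, ⟨h2, Or.inr hw2⟩⟩)

lemma IsValidBackward.card_eq_of_isLeast_tail (hA : IsValidBackward V A)
    (hv : IsLeast (V : Set ℕ) v) (hw : IsLeast ↑(V.filter fun x => v < x ∧ (x, v) ∈ A) w) :
    #A = #(restr A (inside V v w)) + #(restr A (outside V v w)) + 1 := by
  have hvw : v < w := (Finset.mem_filter.mp hw.1).2.1
  have hdisj : Disjoint (restr A (inside V v w)) (restr A (outside V v w)) :=
    Finset.disjoint_left.mpr fun p h₁ h₂ => Finset.disjoint_left.mp disjoint_inside_outside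
      (Finset.mem_filter.mp h₁).2.1 (Finset.mem_filter.mp h₂).2.1
  conv_lhs => rw [hA.eq_insert_restr_union hv hw]
  rw [Finset.card_insert_of_notMem, Finset.card_union_of_disjoint hdisj]
  simp [restr, mem_inside, mem_outside hv]
  omega

lemma restr_insert_union_inside (hA₁ : IsValidBackward (inside V v w) A₁)
    (hA₂ : IsValidBackward (outside V v w) A₂) :
    restr (insert (w, v) (A₁ ∪ A₂)) (inside V v w) = A₁ := by
  rw [restr_insert_of_notMem (by simp [mem_inside]), restr, Finset.filter_union, ← restr,
    ← restr, restr_eq_self_of_isValidBackward hA₁,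
    restr_eq_empty_of_isValidBackward hA₂ disjoint_inside_outside.symm, Finset.union_empty]

lemma restr_insert_union_outside (hvw : v < w) (hA₁ : IsValidBackward (inside V v w) A₁)
    (hA₂ : IsValidBackward (outside V v w) A₂) :
    restr (insert (w, v) (A₁ ∪ A₂)) (outside V v w) = A₂ := by
  rw [restr_insert_of_notMem (by simp [outside, hvw]), restr, Finset.filter_union, ← restr,
    ← restr, restr_eq_self_of_isValidBackward hA₂,
    restr_eq_empty_of_isValidBackward hA₁ disjoint_inside_outside, Finset.empty_union]

lemma isLeast_tail_insert_union (hv : IsLeast (V : Set ℕ) v) (hwV : w ∈ V) (hvw : v < w)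
    (hA₁ : IsValidBackward (inside V v w) A₁) (hA₂ : IsValidBackward (outside V v w) A₂) :
    IsLeast ↑(V.filter fun x => v < x ∧ (x, v) ∈ insert (w, v) (A₁ ∪ A₂)) w := by
  refine ⟨by simp [hwV, hvw], fun x hx => ?_⟩
  simp only [Finset.coe_filter, Set.mem_ofPred_eq, Finset.mem_insert, Finset.mem_union,
    Prod.mk.injEq, and_true] at hx
  obtain ⟨-, hvx, rfl | hx₁ | hx₂⟩ := hx
  · exact le_rfl
  · have := mem_inside.mp (hA₁.1 _ hx₁).2.1
    omega
  · exact ((mem_outside hv).mp (hA₂.1 _ hx₂).1).2.resolve_left hvx.ne' |>.le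

lemma isValidBackward_insert_union (hv : IsLeast (V : Set ℕ) v) (hwV : w ∈ V) (hvw : v < w)
    (hA₁ : IsValidBackward (inside V v w) A₁) (hA₂ : IsValidBackward (outside V v w) A₂) :
    IsValidBackward V (insert (w, v) (A₁ ∪ A₂)) := by
  have shape : ∀ p ∈ insert (w, v) (A₁ ∪ A₂), p.1 ∈ V ∧ p.2 ∈ V ∧ p.2 < p.1 ∧ (p = (w, v) ∨
      (p ∈ A₁ ∧ v < p.2 ∧ p.1 ≤ w) ∨ (p ∈ A₂ ∧ w < p.1 ∧ (p.2 = v ∨ w < p.2))) := by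
    intro p hp
    rcases Finset.mem_insert.mp hp with rfl | hp
    · exact ⟨hwV, hv.1, hvw, Or.inl rfl⟩
    rcases Finset.mem_union.mp hp with hp | hp
    · obtain ⟨h1, h2, h12⟩ := hA₁.1 p hp
      rw [mem_inside] at h1 h2
      exact ⟨h1.1, h2.1, h12, Or.inr (Or.inl ⟨hp, h2.2.1, h1.2.2⟩)⟩
    · obtain ⟨h1, h2, h12⟩ := hA₂.1 p hp
      rw [mem_outside hv] at h1 h2
      have := hv.2 h2.1
      exact ⟨h1.1, h2.1, h12, Or.inr (Or.inr ⟨hp, by omega, h2.2⟩)⟩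
  refine ⟨fun p hp => (shape p hp).imp_right (·.imp_right (·.1)), fun p hp q hq => ?_,
    fun p hp q hq => ?_⟩ <;>
  obtain ⟨-, -, hp12, rfl | ⟨hp₁, hp⟩ | ⟨hp₂, hp⟩⟩ := shape p hp <;>
  obtain ⟨-, -, hq12, rfl | ⟨hq₁, hq⟩ | ⟨hq₂, hq⟩⟩ := shape q hq <;>
  first
  | exact hA₁.2.1 p hp₁ q hq₁ | exact hA₂.2.1 p hp₂ q hq₂
  | exact hA₁.2.2 p hp₁ q hq₁ | exact hA₂.2.2 p hp₂ q hq₂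
  | omega

end Digraph

lemma SP_empty (A : Finset (ℕ × ℕ)) : SP ∅ A = [] := by
  rw [SP, dif_neg Finset.not_nonempty_empty]

lemma SP_of_card_eq_one {V : Finset ℕ} (hV : #V = 1) (A : Finset (ℕ × ℕ)) : SP V A = [] := by
  rw [SP, dif_pos (Finset.card_pos.mp (by omega)), if_pos hV]

lemma SP_of_isolated {V : Finset ℕ} {A : Finset (ℕ × ℕ)} {v : ℕ} (hV : 1 < #V)
    (hv : IsLeast (V : Set ℕ) v) (hA : ∀ x ∈ V, v < x → (x, v) ∉ A) :
    SP V A = H :: SP (V.erase v) (restr A (V.erase v)) := by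
  have hne : V.Nonempty := Finset.card_pos.mp (by omega)
  obtain rfl : V.min' hne = v := (V.isLeast_min' hne).unique hv
  rw [SP, dif_pos hne, if_neg hV.ne', dif_neg]
  rintro ⟨x, hx⟩
  simp only [Finset.mem_filter] at hx
  exact hA x hx.1 hx.2.1 hx.2.2

lemma SP_of_isLeast_tail {V : Finset ℕ} {A : Finset (ℕ × ℕ)} {v w : ℕ} (hV : 1 < #V)
    (hv : IsLeast (V : Set ℕ) v) (hw : IsLeast ↑(V.filter fun x => v < x ∧ (x, v) ∈ A) w) :
    SP V A = U :: (SP (inside V v w) (restr A (inside V v w)) ++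
      D :: SP (outside V v w) (restr A (outside V v w))) := by
  have hne : V.Nonempty := Finset.card_pos.mp (by omega)
  obtain rfl : V.min' hne = v := (V.isLeast_min' hne).unique hv
  have hT : (V.filter fun x => V.min' hne < x ∧ (x, V.min' hne) ∈ A).Nonempty := ⟨w, hw.1⟩
  obtain rfl : _ = w := (Finset.isLeast_min' _ hT).unique hw
  rw [SP, dif_pos hne, if_neg hV.ne', dif_pos hT]
  rfl

lemma isolated_or_exists_isLeast_tail (V : Finset ℕ) (A : Finset (ℕ × ℕ)) (v : ℕ) :
    (∀ x ∈ V, v < x → (x, v) ∉ A) ∨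
      ∃ w : ℕ, IsLeast ↑(V.filter fun x => v < x ∧ (x, v) ∈ A) w := by
  by_cases hT : (V.filter fun x => v < x ∧ (x, v) ∈ A).Nonempty
  · exact Or.inr ⟨_, Finset.isLeast_min' _ hT⟩
  · exact Or.inl fun x hx hvx hxA => hT ⟨x, Finset.mem_filter.mpr ⟨hx, hvx, hxA⟩⟩

theorem SP_induction {motive : Finset ℕ → Finset (ℕ × ℕ) → Prop}
    (empty : ∀ A, motive ∅ A) (single : ∀ V A, #V = 1 → motive V A)
    (isolated : ∀ V A v, 1 < #V → IsLeast (V : Set ℕ) v →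
      (∀ x ∈ V, v < x → (x, v) ∉ A) → motive (V.erase v) (restr A (V.erase v)) → motive V A)
    (arrow : ∀ V A v w, 1 < #V → IsLeast (V : Set ℕ) v →
      IsLeast ↑(V.filter fun x => v < x ∧ (x, v) ∈ A) w →
      motive (inside V v w) (restr A (inside V v w)) →
      motive (outside V v w) (restr A (outside V v w)) → motive V A)
    (V : Finset ℕ) (A : Finset (ℕ × ℕ)) : motive V A := by
  induction V, A using SP.induct with
  | case1 V A _ hV => exact single V A hV
  | case2 V A hne hV _ _ hT _ _ _ ih₁ ih₂ =>
    exact arrow V A _ _ (by have := hne.card_pos; omega) (V.isLeast_min' hne)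
      (Finset.isLeast_min' _ hT) ih₁ ih₂
  | case3 V A hne hV _ _ hT ih =>
    refine isolated V A _ (by have := hne.card_pos; omega) (V.isLeast_min' hne) ?_ ih
    exact fun x hx hvx hxA => hT ⟨x, Finset.mem_filter.mpr ⟨hx, hvx, hxA⟩⟩
  | case4 V A hV => exact Finset.not_nonempty_iff_eq_empty.mp hV ▸ empty A

lemma isSchroederWord_SP (V : Finset ℕ) (A : Finset (ℕ × ℕ)) : IsSchroederWord (SP V A) := by
  induction V, A using SP_induction with
  | empty A => rw [SP_empty]; exact isSchroederWord_nil
  | single V A hV => rw [SP_of_card_eq_one hV]; exact isSchroederWord_nil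
  | isolated V A v hV hv hiso ih =>
    rw [SP_of_isolated hV hv hiso]; exact isSchroederWord_H_cons_iff.mpr ih
  | arrow V A v w hV hv hw ih₁ ih₂ =>
    rw [SP_of_isLeast_tail hV hv hw]; exact isSchroederWord_U_cons_D_append ih₁ ih₂

lemma wordLength_SP {V : Finset ℕ} (hV : V.Nonempty) (A : Finset (ℕ × ℕ)) :
    wordLength (SP V A) + 2 = 2 * #V := by
  induction V, A using SP_induction with
  | empty A => simp at hV
  | single V A hV' => simp [SP_of_card_eq_one hV', hV', wordLength]
  | isolated V A v hV' hv hiso ih =>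
    have hcard := Finset.card_erase_of_mem hv.1
    have := ih (Finset.card_pos.mp (by omega))
    rw [SP_of_isolated hV' hv hiso, wordLength_H_cons]
    omega
  | arrow V A v w hV' hv hw ih₁ ih₂ =>
    obtain ⟨hwV, hvw, -⟩ := Finset.mem_filter.mp hw.1
    have h₁ := ih₁ ⟨w, mem_inside.mpr ⟨hwV, hvw, le_rfl⟩⟩
    have h₂ := ih₂ ⟨v, (mem_outside hv).mpr ⟨hv.1, Or.inl rfl⟩⟩
    have := card_inside_add_card_outside (V := V) (v := v) (w := w)
    rw [SP_of_isLeast_tail hV' hv hw, wordLength_U_cons_D_append]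
    omega

lemma count_U_SP {V : Finset ℕ} {A : Finset (ℕ × ℕ)} (hA : IsValidBackward V A) :
    (SP V A).count U = #A := by
  induction V, A using SP_induction with
  | empty A =>
    rw [hA.eq_empty_of_card_le_one (by simp), SP_empty]; rfl
  | single V A hV => rw [hA.eq_empty_of_card_le_one hV.le, SP_of_card_eq_one hV]; rfl
  | isolated V A v hV hv hiso ih =>
    have hA' := hA.erase_of_isolated hv hiso
    rw [SP_of_isolated hV hv hiso, List.count_cons_of_ne (by decide),
      ih (isValidBackward_restr hA _), restr_eq_self_of_isValidBackward hA']
  | arrow V A v w hV hv hw ih₁ ih₂ =>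
    rw [SP_of_isLeast_tail hV hv hw, hA.card_eq_of_isLeast_tail hv hw,
      ← ih₁ (isValidBackward_restr hA _), ← ih₂ (isValidBackward_restr hA _)]
    simp

lemma count_D_SP {V : Finset ℕ} {A : Finset (ℕ × ℕ)} (hA : IsValidBackward V A) :
    (SP V A).count D = #A :=
  (isSchroederWord_SP V A).1 ▸ count_U_SP hA

theorem SP_injOn (V : Finset ℕ) : Set.InjOn (SP V) {A | IsValidBackward V A} := by
  intro A hA A' hA' heq
  induction V, A using SP_induction generalizing A' with
  | empty A => rw [hA.eq_empty_of_card_le_one (by simp), hA'.eq_empty_of_card_le_one (by simp)]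
  | single V A hV => rw [hA.eq_empty_of_card_le_one hV.le, hA'.eq_empty_of_card_le_one hV.le]
  | isolated V A v hV hv hiso ih =>
    rcases isolated_or_exists_isLeast_tail V A' v with hiso' | ⟨w', hw'⟩
    · rw [SP_of_isolated hV hv hiso, SP_of_isolated hV hv hiso', List.cons_inj_right] at heq
      have := ih (isValidBackward_restr hA _) (isValidBackward_restr hA' _) heq
      rwa [restr_eq_self_of_isValidBackward (hA.erase_of_isolated hv hiso),
        restr_eq_self_of_isValidBackward (hA'.erase_of_isolated hv hiso')] at this
    · rw [SP_of_isolated hV hv hiso, SP_of_isLeast_tail hV hv hw'] at heq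
      simp at heq
  | arrow V A v w hV hv hw ih₁ ih₂ =>
    rcases isolated_or_exists_isLeast_tail V A' v with hiso' | ⟨w', hw'⟩
    · rw [SP_of_isolated hV hv hiso', SP_of_isLeast_tail hV hv hw] at heq
      simp at heq
    rw [SP_of_isLeast_tail hV hv hw, SP_of_isLeast_tail hV hv hw', List.cons_inj_right] at heq
    obtain ⟨hs, ht⟩ :=
      eq_of_append_D_cons_eq (isSchroederWord_SP _ _) (isSchroederWord_SP _ _) heq
    obtain ⟨hwV, hvw, -⟩ := Finset.mem_filter.mp hw.1
    obtain ⟨hwV', hvw', -⟩ := Finset.mem_filter.mp hw'.1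
    obtain rfl : w = w' := by
      have h₁ := wordLength_SP ⟨w, mem_inside.mpr ⟨hwV, hvw, le_rfl⟩⟩
        (restr A (inside V v w))
      have h₂ := wordLength_SP ⟨w', mem_inside.mpr ⟨hwV', hvw', le_rfl⟩⟩
        (restr A' (inside V v w'))
      exact eq_of_card_inside_eq hwV hvw hwV' hvw' (by rw [hs] at h₁; omega)
    rw [hA.eq_insert_restr_union hv hw, hA'.eq_insert_restr_union hv hw',
      ih₁ (isValidBackward_restr hA _) (isValidBackward_restr hA' _) hs,
      ih₂ (isValidBackward_restr hA _) (isValidBackward_restr hA' _) ht]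

lemma exists_SP_eq {word : List DLetter} (hword : IsSchroederWord word) {n : ℕ} {V : Finset ℕ}
    (hV : #V = n + 1) (hlen : wordLength word = 2 * n) :
    ∃ A, IsValidBackward V A ∧ SP V A = word := by
  induction hword using IsSchroederWord.induction generalizing n V with
  | nil =>
    exact ⟨∅, isValidBackward_empty V, SP_of_card_eq_one (by simp_all [wordLength]) ∅⟩
  | H_cons r hr ih =>
    rw [wordLength_H_cons] at hlen
    obtain ⟨m, rfl⟩ : ∃ m, n = m + 1 := ⟨n - 1, by omega⟩
    have hne : V.Nonempty := Finset.card_pos.mp (by omega)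
    set v := V.min' hne
    have hv : IsLeast (V : Set ℕ) v := V.isLeast_min' hne
    obtain ⟨A, hA, rfl⟩ := ih (V := V.erase v) (by rw [Finset.card_erase_of_mem hv.1, hV]; rfl)
      (by omega)
    have hiso : ∀ x ∈ V, v < x → (x, v) ∉ A := fun x _ _ hxA => by
      simpa using (hA.1 _ hxA).2.1
    refine ⟨A, hA.mono (V.erase_subset v), ?_⟩
    rw [SP_of_isolated (by omega) hv hiso, restr_eq_self_of_isValidBackward hA]
  | U_cons s t hs ht ih₁ ih₂ =>
    rw [wordLength_U_cons_D_append, hs.wordLength_eq, ht.wordLength_eq] at hlen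
    set a := s.count U + s.count H
    set b := t.count U + t.count H
    have hne : V.Nonempty := Finset.card_pos.mp (by omega)
    set v := V.min' hne
    have hv : IsLeast (V : Set ℕ) v := V.isLeast_min' hne
    obtain ⟨w, hw, hcard⟩ := Finset.exists_card_filter_le_eq {x ∈ V | v < x} (k := a)
      (by rw [filter_lt_eq_erase hv, Finset.card_erase_of_mem hv.1]; omega)
    obtain ⟨hwV, hvw⟩ := Finset.mem_filter.mp hw
    rw [← inside_eq_filter_le] at hcard
    have := card_inside_add_card_outside (V := V) (v := v) (w := w)
    obtain ⟨A₁, hA₁, rfl⟩ := ih₁ hcard hs.wordLength_eq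
    obtain ⟨A₂, hA₂, rfl⟩ := ih₂ (V := outside V v w) (n := b) (by omega) ht.wordLength_eq
    refine ⟨_, isValidBackward_insert_union hv hwV hvw hA₁ hA₂, ?_⟩
    rw [SP_of_isLeast_tail (by omega) hv (isLeast_tail_insert_union hv hwV hvw hA₁ hA₂),
      restr_insert_union_inside hA₁ hA₂, restr_insert_union_outside hvw hA₁ hA₂]

/-- `SP` is a bijection between the set of valid digraphs consisting only of
backward arrows on an `(n+1)`-element node set and the set of Schröder words of
length `2n`; moreover a digraph with exactly `k` backward arrows maps to a word
with exactly `k` letters `U` and `k` letters `D`. -/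
theorem SP_bijection (n : ℕ) (V : Finset ℕ) (hV : V.card = n + 1) :
    Set.BijOn (SP V) {A | IsValidBackward V A}
      {w | IsSchroederWord w ∧ wordLength w = 2 * n} ∧
    ∀ A : Finset (ℕ × ℕ), IsValidBackward V A →
      (SP V A).count DLetter.U = A.card ∧ (SP V A).count DLetter.D = A.card := by
  have hne : V.Nonempty := Finset.card_pos.mp (by omega)
  refine ⟨⟨fun A _ => ⟨isSchroederWord_SP V A, ?_⟩, SP_injOn V,
    fun w hw => exists_SP_eq hw.1 hV hw.2⟩, fun A hA => ⟨count_U_SP hA, count_D_SP hA⟩⟩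
  have := wordLength_SP hne A
  omega
end
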